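/- Let p be a prime greater than 5, and in the generalized Petersen graph GP(p,2) set X = {v₀, v₂, u₁} and Y = {v₁, v₃, u₂}. Then there exists a family of nine paths P_{x,y} in GP(p,2), one for each pair (x,y) ∈ X × Y, such that P_{x,y} has endpoints x and y, no internal vertex of any of the nine paths lies in X ∪ Y, and any two distinct paths of the family meet only in common endpoints (their internal vertex sets are pairwise disjoint and internal vertices are distinct from all endpoints of the other paths). In particular, GP(p,2) contains a subdivision of the complete bipartite graph K_{3,3}. -/

import Mathlib

/-- The generalized Petersen graph `GP n k` on vertex set `ZMod n ⊕ ZMod n`: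
`Sum.inl i` is the outer vertex `v i`, `Sum.inr i` is the inner vertex `u i`,
with edges `v i ~ v (i+1)`, `v i ~ u i`, and `u i ~ u (i+k)`. -/
def GP (n k : ℕ) : SimpleGraph (ZMod n ⊕ ZMod n) :=
  SimpleGraph.fromRel (fun x y =>
    (∃ i : ZMod n, x = Sum.inl i ∧ y = Sum.inl (i + 1)) ∨
    (∃ i : ZMod n, x = Sum.inl i ∧ y = Sum.inr i) ∨
    (∃ i : ZMod n, x = Sum.inr i ∧ y = Sum.inr (i + (k : ZMod n))))

/-- The branch vertex set `X = {v 0, v 2, u 1}` of Case 3a of the paper's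
Lemma 4.2, as an indexed family. -/
def Xv (p : ℕ) : Fin 3 → ZMod p ⊕ ZMod p := ![Sum.inl 0, Sum.inl 2, Sum.inr 1]

/-- The branch vertex set `Y = {v 1, v 3, u 2}` of Case 3a of the paper's
Lemma 4.2, as an indexed family. -/
def Yv (p : ℕ) : Fin 3 → ZMod p ⊕ ZMod p := ![Sum.inl 1, Sum.inl 3, Sum.inr 2]

/-!
Seven of the nine paths have length at most two; the other two are the outer arc
`v₀ v_{p-1} … v₄ v₃` and the inner arc `u₁ u_{p-1} … u₄ u₂`, which steps by `2` and closes up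
because `p` is odd. Rather than comparing the paths pairwise, assign to each vertex the path, if
any, through whose interior it runs (`k33Owner`), with no path assigned to a branch vertex: since
this is a function, two distinct paths can share only branch vertices.
-/

namespace SimpleGraph

variable {V A : Type*} {G : SimpleGraph V}

def progressionWalk [AddMonoid A] (f : A → V) (d : A) (hadj : ∀ x, G.Adj (f x) (f (x + d))) :
    (m : ℕ) → (s : A) → G.Walk (f s) (f (s + m • d))
  | 0, s => Walk.nil.copy rfl (by rw [zero_nsmul, add_zero])
  | m + 1, s => (Walk.cons (hadj s) (progressionWalk f d hadj m (s + d))).copy rfl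
      (by rw [succ_nsmul', add_assoc])

theorem mem_support_progressionWalk_iff [AddMonoid A] {f : A → V} {d : A}
    {hadj : ∀ x, G.Adj (f x) (f (x + d))} {m : ℕ} {s : A} {v : V} :
    v ∈ (progressionWalk f d hadj m s).support ↔ ∃ j ≤ m, v = f (s + j • d) := by
  induction m generalizing s with
  | zero => simp [progressionWalk]
  | succ m ih =>
    simp only [progressionWalk, Walk.support_copy, Walk.support_cons, List.mem_cons, ih]
    constructor
    · rintro (rfl | ⟨j, hj, rfl⟩)
      · exact ⟨0, by omega, by simp⟩
      · exact ⟨j + 1, by omega, by rw [succ_nsmul', add_assoc]⟩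
    · rintro ⟨_ | j, hj, rfl⟩
      · simp
      · exact Or.inr ⟨j, by omega, by rw [succ_nsmul', add_assoc]⟩

theorem progressionWalk_isPath [AddLeftCancelMonoid A] {f : A → V} (hf : f.Injective) {d : A}
    {hadj : ∀ x, G.Adj (f x) (f (x + d))} {m : ℕ} (hm : m < addOrderOf d) (s : A) :
    (progressionWalk f d hadj m s).IsPath := by
  induction m generalizing s with
  | zero => simp [progressionWalk]
  | succ m ih =>
    rw [progressionWalk, Walk.isPath_copy, Walk.cons_isPath_iff]
    refine ⟨ih (by omega) _, fun h ↦ ?_⟩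
    obtain ⟨j, hj, hs⟩ := mem_support_progressionWalk_iff.mp h
    have hzero : (j + 1) • d = 0 := by
      rw [add_assoc, ← succ_nsmul'] at hs
      exact left_eq_add.mp (hf hs)
    have := addOrderOf_le_of_nsmul_eq_zero j.succ_pos hzero
    omega

theorem isPath_cons_toWalk {u v w : V} (h : G.Adj u v) (h' : G.Adj v w) (huw : u ≠ w) :
    (Walk.cons h h'.toWalk).IsPath := by
  rw [Walk.cons_isPath_iff]
  exact ⟨h'.isPath_toWalk, by simp [h.ne, huw]⟩

theorem Walk.meet_only_at_ends_of_owner {ι κ : Type*} {X : ι → V} {Y : κ → V}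
    (P : ∀ a b, G.Walk (X a) (Y b)) (owner : V → Option (ι × κ))
    (hX : ∀ a, owner (X a) = none) (hY : ∀ b, owner (Y b) = none)
    (hP : ∀ a b, ∀ v ∈ (P a b).support, v = X a ∨ v = Y b ∨ owner v = some (a, b)) :
    (∀ a b, ∀ v ∈ (P a b).support, v ∈ Set.range X ∪ Set.range Y → v = X a ∨ v = Y b) ∧
    (∀ a b a' b', (a, b) ≠ (a', b') → ∀ v, v ∈ (P a b).support → v ∈ (P a' b').support →
      (v = X a ∨ v = Y b) ∧ (v = X a' ∨ v = Y b')) := by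
  have hlabel : ∀ a b, ∀ v ∈ (P a b).support,
      owner v = none ∧ (v = X a ∨ v = Y b) ∨ owner v = some (a, b) := by
    intro a b v hv
    rcases hP a b v hv with rfl | rfl | h
    exacts [.inl ⟨hX a, .inl rfl⟩, .inl ⟨hY b, .inr rfl⟩, .inr h]
  refine ⟨fun a b v hv hXY ↦ ?_, fun a b a' b' hne v hv hv' ↦ ?_⟩
  · have hnone : owner v = none := by
      rcases hXY with ⟨a', rfl⟩ | ⟨b', rfl⟩
      exacts [hX a', hY b']
    rcases hlabel a b v hv with ⟨-, hend⟩ | h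
    exacts [hend, by simp [hnone] at h]
  · rcases hlabel a b v hv with ⟨h, hend⟩ | h <;>
      rcases hlabel a' b' v hv' with ⟨h', hend'⟩ | h'
    · exact ⟨hend, hend'⟩
    all_goals simp_all

end SimpleGraph

namespace ZMod

variable {n : ℕ}

theorem natCast_ne_zero_of_lt {a : ℕ} (ha : 0 < a) (han : a < n) : (a : ZMod n) ≠ 0 :=
  (natCast_eq_zero_iff a n).not.mpr (Nat.not_dvd_of_pos_of_lt ha han)

theorem addOrderOf_two_of_odd (hn : Odd n) : addOrderOf (2 : ZMod n) = n := by
  simpa [hn.coprime_two_right.gcd_eq_one] using addOrderOf_coe' n two_ne_zero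

theorem three_add_nsmul_one_eq_zero (h3 : 3 ≤ n) : (3 : ZMod n) + (n - 3) • 1 = 0 := by
  rw [nsmul_one, Nat.cast_sub h3, natCast_self]
  simp

theorem two_add_nsmul_two_eq_one (hn : Odd n) : (2 : ZMod n) + ((n - 1) / 2) • 2 = 1 := by
  obtain ⟨m, rfl⟩ := hn
  have hzero : ((2 * m + 1 : ℕ) : ZMod (2 * m + 1)) = 0 := natCast_self _
  rw [show (2 * m + 1 - 1) / 2 = m by omega, nsmul_eq_mul]
  push_cast at hzero
  linear_combination hzero

end ZMod

namespace GP

open SimpleGraph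

variable {n k : ℕ}

theorem adj_outer (hn : n ≠ 1) {i j : ZMod n} (hij : i + 1 = j) :
    (GP n k).Adj (.inl i) (.inl j) := by
  rw [GP, fromRel_adj]
  exact ⟨by simpa [← hij, ZMod.one_eq_zero_iff] using hn, .inl (.inl ⟨i, rfl, hij ▸ rfl⟩)⟩

theorem adj_spoke (i : ZMod n) : (GP n k).Adj (.inl i) (.inr i) := by
  rw [GP, fromRel_adj]
  exact ⟨by simp, .inl (.inr (.inl ⟨i, rfl, rfl⟩))⟩

theorem adj_inner (hk : (k : ZMod n) ≠ 0) {i j : ZMod n} (hij : i + k = j) :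
    (GP n k).Adj (.inr i) (.inr j) := by
  rw [GP, fromRel_adj]
  exact ⟨by simpa [← hij] using hk, .inl (.inr (.inr ⟨i, rfl, hij ▸ rfl⟩))⟩

theorem adj_inner_two (h2 : 2 < n) {i j : ZMod n} (hij : i + 2 = j) :
    (GP n 2).Adj (.inr i) (.inr j) :=
  adj_inner (ZMod.natCast_ne_zero_of_lt two_pos h2) (by simpa using hij)

def outerArc (h3 : 3 ≤ n) : (GP n k).Walk (.inl 0) (.inl 3) :=
  ((progressionWalk Sum.inl 1 (fun _ ↦ adj_outer (by omega) rfl) (n - 3) 3).copy rfl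
    (congrArg _ (ZMod.three_add_nsmul_one_eq_zero h3))).reverse

theorem mem_support_outerArc_iff (h3 : 3 ≤ n) {v : ZMod n ⊕ ZMod n} :
    v ∈ (outerArc (k := k) h3).support ↔ ∃ j ≤ n - 3, v = .inl (3 + j • 1) := by
  simp only [outerArc, Walk.support_reverse, List.mem_reverse, Walk.support_copy,
    mem_support_progressionWalk_iff]

theorem outerArc_isPath (h3 : 3 ≤ n) : (outerArc (k := k) h3).IsPath :=
  ((Walk.isPath_copy _ _ _).mpr <| progressionWalk_isPath Sum.inl_injective
    (by rw [ZMod.addOrderOf_one]; omega) _).reverse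

def innerArc (hn : Odd n) (h2 : 2 < n) : (GP n 2).Walk (.inr 1) (.inr 2) :=
  ((progressionWalk Sum.inr 2 (fun _ ↦ adj_inner_two h2 rfl) ((n - 1) / 2) 2).copy rfl
    (congrArg _ (ZMod.two_add_nsmul_two_eq_one hn))).reverse

theorem mem_support_innerArc_iff (hn : Odd n) (h2 : 2 < n) {v : ZMod n ⊕ ZMod n} :
    v ∈ (innerArc hn h2).support ↔ ∃ j ≤ (n - 1) / 2, v = .inr (2 + j • 2) := by
  simp only [innerArc, Walk.support_reverse, List.mem_reverse, Walk.support_copy,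
    mem_support_progressionWalk_iff]

theorem innerArc_isPath (hn : Odd n) (h2 : 2 < n) : (innerArc hn h2).IsPath :=
  ((Walk.isPath_copy _ _ _).mpr <| progressionWalk_isPath Sum.inr_injective
    (by rw [ZMod.addOrderOf_two_of_odd hn]; omega) _).reverse

def k33Walk (hn : Odd n) (h3 : 3 < n) : ∀ a b : Fin 3, (GP n 2).Walk (Xv n a) (Yv n b)
  | 0, 0 => (adj_outer (by omega) (zero_add 1)).toWalk
  | 0, 1 => outerArc h3.le
  | 0, 2 => .cons (adj_spoke 0) (adj_inner_two (by omega) (zero_add 2)).toWalk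
  | 1, 0 => (adj_outer (by omega) one_add_one_eq_two).symm.toWalk
  | 1, 1 => (adj_outer (by omega) two_add_one_eq_three).toWalk
  | 1, 2 => (adj_spoke 2).toWalk
  | 2, 0 => (adj_spoke 1).symm.toWalk
  | 2, 1 => .cons (adj_inner_two (by omega) (by norm_num)) (adj_spoke 3).symm.toWalk
  | 2, 2 => innerArc hn (by omega)

theorem k33Walk_isPath (hn : Odd n) (h3 : 3 < n) (a b : Fin 3) : (k33Walk hn h3 a b).IsPath := by
  match a, b with
  | 0, 0 | 1, 0 | 1, 1 | 1, 2 | 2, 0 => exact Adj.isPath_toWalk _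
  | 0, 1 => exact outerArc_isPath h3.le
  | 0, 2 => exact isPath_cons_toWalk _ _ Sum.inl_ne_inr
  | 2, 1 => exact isPath_cons_toWalk _ _ Sum.inr_ne_inl
  | 2, 2 => exact innerArc_isPath hn (by omega)

def k33Owner (n : ℕ) : ZMod n ⊕ ZMod n → Option (Fin 3 × Fin 3)
  | .inl i => if 4 ≤ i.val then some (0, 1) else none
  | .inr i => if i.val = 0 then some (0, 2) else if i.val = 3 then some (2, 1)
      else if 4 ≤ i.val ∧ Even i.val then some (2, 2) else none

theorem k33Owner_Xv (h3 : 3 < n) (a : Fin 3) : k33Owner n (Xv n a) = none := by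
  have : Fact (1 < n) := ⟨by omega⟩
  have h2 : (2 : ZMod n).val = 2 := by simpa using ZMod.val_natCast_of_lt (show 2 < n by omega)
  fin_cases a <;> simp [k33Owner, Xv, ZMod.val_one, h2]

theorem k33Owner_Yv (h3 : 3 < n) (b : Fin 3) : k33Owner n (Yv n b) = none := by
  have : Fact (1 < n) := ⟨by omega⟩
  have h2 : (2 : ZMod n).val = 2 := by simpa using ZMod.val_natCast_of_lt (show 2 < n by omega)
  fin_cases b <;> simp [k33Owner, Yv, ZMod.val_one, h2, ZMod.val_ofNat_of_lt h3]

theorem mem_support_outerArc (h3 : 3 ≤ n) :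
    ∀ v ∈ (outerArc (k := k) h3).support,
      v = .inl 0 ∨ v = .inl 3 ∨ k33Owner n v = some (0, 1) := by
  intro v hv
  obtain ⟨j, hj, rfl⟩ := (mem_support_outerArc_iff h3).mp hv
  rcases Nat.eq_zero_or_pos j with rfl | hj0
  · simp
  rcases hj.eq_or_lt with rfl | hjlt
  · exact .inl (congrArg _ (ZMod.three_add_nsmul_one_eq_zero h3))
  have hcast : (3 + j • 1 : ZMod n) = ((3 + j : ℕ) : ZMod n) := by simp
  refine .inr (.inr ?_)
  rw [hcast]
  simp only [k33Owner, ZMod.val_natCast_of_lt (show 3 + j < n by omega)]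
  rw [if_pos (by omega)]

theorem mem_support_innerArc (hn : Odd n) (h2 : 2 < n) :
    ∀ v ∈ (innerArc hn h2).support, v = .inr 1 ∨ v = .inr 2 ∨ k33Owner n v = some (2, 2) := by
  intro v hv
  obtain ⟨j, hj, rfl⟩ := (mem_support_innerArc_iff hn h2).mp hv
  rcases Nat.eq_zero_or_pos j with rfl | hj0
  · simp
  rcases hj.eq_or_lt with rfl | hjlt
  · exact .inl (congrArg _ (ZMod.two_add_nsmul_two_eq_one hn))
  have hcast : (2 + j • 2 : ZMod n) = ((2 * (j + 1) : ℕ) : ZMod n) := by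
    rw [nsmul_eq_mul]
    push_cast
    ring
  refine .inr (.inr ?_)
  rw [hcast]
  simp only [k33Owner, ZMod.val_natCast_of_lt (show 2 * (j + 1) < n by omega)]
  rw [if_neg (by omega), if_neg (by omega), if_pos ⟨by omega, even_two_mul _⟩]

theorem mem_support_k33Walk (hn : Odd n) (h3 : 3 < n) (a b : Fin 3) :
    ∀ v ∈ (k33Walk hn h3 a b).support, v = Xv n a ∨ v = Yv n b ∨ k33Owner n v = some (a, b) := by
  intro v hv
  match a, b with
  | 0, 0 =>
    change v ∈ [.inl 0, .inl 1] at hv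
    fin_cases hv <;> simp [Xv, Yv]
  | 0, 1 => exact mem_support_outerArc h3.le v hv
  | 0, 2 =>
    change v ∈ [.inl 0, .inr 0, .inr 2] at hv
    fin_cases hv <;> simp [Xv, Yv, k33Owner]
  | 1, 0 =>
    change v ∈ [.inl 2, .inl 1] at hv
    fin_cases hv <;> simp [Xv, Yv]
  | 1, 1 =>
    change v ∈ [.inl 2, .inl 3] at hv
    fin_cases hv <;> simp [Xv, Yv]
  | 1, 2 =>
    change v ∈ [.inl 2, .inr 2] at hv
    fin_cases hv <;> simp [Xv, Yv]
  | 2, 0 =>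
    change v ∈ [.inr 1, .inl 1] at hv
    fin_cases hv <;> simp [Xv, Yv]
  | 2, 1 =>
    change v ∈ [.inr 1, .inr 3, .inl 3] at hv
    fin_cases hv <;> simp [Xv, Yv, k33Owner, ZMod.val_ofNat_of_lt h3]
  | 2, 2 => exact mem_support_innerArc hn (by omega) v hv

end GP

/-- Case 3a of the proof of the paper's Lemma 4.2: for a prime `p > 5`, with
`X = {v 0, v 2, u 1}` and `Y = {v 1, v 3, u 2}`, there is a family of nine
paths in `GP p 2`, one joining each `x ∈ X` to each `y ∈ Y`, such that no
internal vertex of any path lies in `X ∪ Y`, and any two distinct paths of the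
family meet only in common endpoints.  (This exhibits a subdivision of
`K_{3,3}` in `GP p 2`.) -/
theorem GP_contains_K33_subdivision (p : ℕ) (hp : p.Prime) (hp5 : 5 < p) :
    ∃ P : ∀ a b : Fin 3, (GP p 2).Walk (Xv p a) (Yv p b),
      (∀ a b : Fin 3, (P a b).IsPath) ∧
      (∀ a b : Fin 3, ∀ v ∈ (P a b).support,
        v ∈ Set.range (Xv p) ∪ Set.range (Yv p) → v = Xv p a ∨ v = Yv p b) ∧
      (∀ a b a' b' : Fin 3, (a, b) ≠ (a', b') →
        ∀ v : ZMod p ⊕ ZMod p, v ∈ (P a b).support → v ∈ (P a' b').support →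
          (v = Xv p a ∨ v = Yv p b) ∧ (v = Xv p a' ∨ v = Yv p b')) := by
  have hodd : Odd p := hp.odd_of_ne_two (by omega)
  have h3 : 3 < p := by omega
  exact ⟨GP.k33Walk hodd h3, GP.k33Walk_isPath hodd h3,
    SimpleGraph.Walk.meet_only_at_ends_of_owner _ _ (GP.k33Owner_Xv h3) (GP.k33Owner_Yv h3)
      (GP.mem_support_k33Walk hodd h3)⟩
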